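/- arXiv:2201.09475 — 2 statements merged into one kernel-verified Lean document; each statement's English description precedes it below -/
import Mathlib

section
/- Let $N \geq 1$ be an integer. The commutative ring $\mathbb{C}[\delta,\xi,\eta]/(\xi^2 - \delta\eta^2 + \delta^{N-1})$ is an integral domain. -/
set_option maxHeartbeats 1000000
set_option synthInstance.maxHeartbeats 400000

open MvPolynomial

/-- The polynomial `ξ² - δη² + δ^(N-1)` in variables `δ = X 0`, `ξ = X 1`, `η = X 2`. -/
noncomputable def coulombPoly (N : ℕ) : MvPolynomial (Fin 3) ℂ :=
  X 1 ^ 2 - X 0 * X 2 ^ 2 + X 0 ^ (N - 1)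

open Polynomial in
lemma no_sqrt (N : ℕ) (hN : 1 ≤ N) (a : MvPolynomial (Fin 2) ℂ)
    (ha : a ^ 2 = X 0 * X 1 ^ 2 - X 0 ^ (N - 1)) : False := by
  set ψ := MvPolynomial.finSuccEquiv ℂ 1 with hψ
  have h1 : (1 : Fin 2) = Fin.succ 0 := rfl
  have hg : (ψ a) ^ 2
      = Polynomial.X * Polynomial.C ((X 0 : MvPolynomial (Fin 1) ℂ) ^ 2)
        - Polynomial.X ^ (N - 1) := by
    have hX1 : (MvPolynomial.finSuccEquiv ℂ 1) (X (1 : Fin 2)) = Polynomial.C (X 0) := by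
      rw [h1, MvPolynomial.finSuccEquiv_X_succ]
    rw [← map_pow, ha]
    simp [hψ, MvPolynomial.finSuccEquiv_X_zero, hX1]
  set g := ψ a with hgdef
  set u : MvPolynomial (Fin 1) ℂ := X 0 with hu
  rcases eq_or_lt_of_le hN with h1' | h2
  · -- N = 1
    have hN1 : N - 1 = 0 := by omega
    rw [hN1, pow_zero] at hg
    have hlin : Polynomial.X * Polynomial.C (u ^ 2) - 1
        = Polynomial.C (u ^ 2) * Polynomial.X + Polynomial.C (-1) := by
      simp [map_neg]; ring
    have hdeg : (g ^ 2).natDegree = 1 := by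
      rw [hg, hlin, Polynomial.natDegree_linear (pow_ne_zero 2 (MvPolynomial.X_ne_zero 0))]
    rw [Polynomial.natDegree_pow] at hdeg
    omega
  · -- N ≥ 2
    have hN2 : 1 ≤ N - 1 := by omega
    have hc0 : (g ^ 2).coeff 0 = 0 := by
      have h0 : ¬ (0 = N - 1) := by omega
      rw [hg]
      simp [Polynomial.coeff_X_pow, h0]
    have hg0 : g.coeff 0 = 0 := by
      have : g.coeff 0 ^ 2 = 0 := by
        rw [sq, ← Polynomial.mul_coeff_zero, ← sq, hc0]
      exact pow_eq_zero_iff (by norm_num) |>.mp this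
    obtain ⟨h, hh⟩ := Polynomial.X_dvd_iff.mpr hg0
    have hcoe1 : (g ^ 2).coeff 1 = 0 := by
      rw [hh, mul_pow, (by ring : Polynomial.X ^ 2 * h ^ 2 = h ^ 2 * Polynomial.X ^ 2),
        Polynomial.coeff_mul_X_pow']
      norm_num
    rw [hg] at hcoe1
    simp [Polynomial.coeff_X_pow, Polynomial.coeff_X_mul, ← map_pow,
      Polynomial.coeff_C] at hcoe1
    -- hcoe1 : u ^ 2 - (if 1 = N - 1 then 1 else 0) = 0  (roughly)
    by_cases hN3 : 1 = N - 1
    · rw [if_pos hN3] at hcoe1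
      have := congrArg (MvPolynomial.eval fun _ => (2:ℂ)) hcoe1
      norm_num [hu] at this
    · rw [if_neg hN3] at hcoe1
      have := congrArg (MvPolynomial.eval fun _ => (2:ℂ)) hcoe1
      norm_num [hu] at this

open Polynomial in
lemma prime_coulombPoly (N : ℕ) (hN : 1 ≤ N) : Prime (coulombPoly N) := by
  let φ : MvPolynomial (Fin 3) ℂ ≃ₐ[ℂ] Polynomial (MvPolynomial (Fin 2) ℂ) :=
    (MvPolynomial.renameEquiv ℂ (Equiv.swap 0 1)).trans (MvPolynomial.finSuccEquiv ℂ 2)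
  rw [← MulEquiv.prime_iff φ.toMulEquiv]
  set c : MvPolynomial (Fin 2) ℂ := X 0 ^ (N - 1) - X 0 * X 1 ^ 2 with hc
  have hφ : φ.toMulEquiv (coulombPoly N) = Polynomial.X ^ 2 + Polynomial.C c := by
    show φ (coulombPoly N) = _
    have e0 : φ (X 0) = Polynomial.C (X 0) := by
      simp only [φ, AlgEquiv.trans_apply, MvPolynomial.renameEquiv_apply, MvPolynomial.rename_X]
      rw [show (Equiv.swap (0:Fin 3) 1) 0 = Fin.succ 0 by decide, MvPolynomial.finSuccEquiv_X_succ]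
    have e1 : φ (X 1) = Polynomial.X := by
      simp only [φ, AlgEquiv.trans_apply, MvPolynomial.renameEquiv_apply, MvPolynomial.rename_X]
      rw [show (Equiv.swap (0:Fin 3) 1) 1 = 0 by decide, MvPolynomial.finSuccEquiv_X_zero]
    have e2 : φ (X 2) = Polynomial.C (X 1) := by
      simp only [φ, AlgEquiv.trans_apply, MvPolynomial.renameEquiv_apply, MvPolynomial.rename_X]
      rw [show (Equiv.swap (0:Fin 3) 1) 2 = Fin.succ 1 by decide, MvPolynomial.finSuccEquiv_X_succ]
    rw [coulombPoly]
    rw [map_add, map_sub, map_pow, map_mul, map_pow, map_pow, e0, e1, e2, hc]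
    rw [map_sub, map_mul, map_pow, map_pow]
    ring
  rw [hφ]
  have hmonic : (Polynomial.X ^ 2 + Polynomial.C c).Monic :=
    Polynomial.monic_X_pow_add_C c (by norm_num)
  rw [← UniqueFactorizationMonoid.irreducible_iff_prime]
  rw [hmonic.irreducible_iff_irreducible_map_fraction_map
    (K := FractionRing (MvPolynomial (Fin 2) ℂ))]
  have hmap : (Polynomial.X ^ 2 + Polynomial.C c).map
        (algebraMap (MvPolynomial (Fin 2) ℂ) (FractionRing (MvPolynomial (Fin 2) ℂ)))
      = Polynomial.X ^ 2
        - Polynomial.C (algebraMap (MvPolynomial (Fin 2) ℂ)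
            (FractionRing (MvPolynomial (Fin 2) ℂ)) (-c)) := by
    rw [Polynomial.map_add, Polynomial.map_pow, Polynomial.map_X, Polynomial.map_C, map_neg,
      Polynomial.C_neg]
    ring
  rw [hmap]
  apply X_pow_sub_C_irreducible_of_prime Nat.prime_two
  intro b hb
  have hint : IsIntegral (MvPolynomial (Fin 2) ℂ) b := by
    refine ⟨Polynomial.X ^ 2 - Polynomial.C (-c),
      Polynomial.monic_X_pow_sub_C _ (by norm_num), ?_⟩
    rw [Polynomial.eval₂_sub, Polynomial.eval₂_pow, Polynomial.eval₂_X, Polynomial.eval₂_C, hb,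
      sub_self]
  obtain ⟨a, haeq⟩ := IsIntegrallyClosed.isIntegral_iff.mp hint
  have heq : algebraMap (MvPolynomial (Fin 2) ℂ) (FractionRing (MvPolynomial (Fin 2) ℂ)) (a ^ 2)
      = algebraMap (MvPolynomial (Fin 2) ℂ) (FractionRing (MvPolynomial (Fin 2) ℂ)) (-c) := by
    rw [map_pow, haeq, hb]
  have ha2 : a ^ 2 = -c :=
    IsFractionRing.injective (MvPolynomial (Fin 2) ℂ) (FractionRing (MvPolynomial (Fin 2) ℂ)) heq
  exact no_sqrt N hN a (by rw [ha2, hc]; ring)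

/-- For `N ≥ 1`, the ring `ℂ[δ,ξ,η]/(ξ² - δη² + δ^(N-1))` is an integral domain. -/
theorem stmt0 (N : ℕ) (hN : 1 ≤ N) :
    IsDomain (MvPolynomial (Fin 3) ℂ ⧸ Ideal.span {coulombPoly N}) := by
  have hp := prime_coulombPoly N hN
  have : (Ideal.span {coulombPoly N}).IsPrime := (Ideal.span_singleton_prime hp.ne_zero).mpr hp
  exact Ideal.Quotient.isDomain _
end

section
/- Let $\mathbf{M} = \bigoplus_{k} V^k \otimes M^k$ be a symplectic representation of $\mathrm{SL}(2,\mathbb{C})$, and for a weight $\chi \in \mathbb{Z}$ let $m_\chi$ denote the dimension of the $\chi$-weight space of $\mathbf{M}$. Then $\sum_{\chi \in \mathbb{Z}} |\chi| m_\chi / 4$ is an integer if and only if $\sum_{\ell \in \mathbb{N}} \dim M^{4\ell+1}$ is even. -/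
/-- Sum of `|χ|`-weighted indicator over the weights of `V^k` restricted to `[0,k]`. -/
def Afun (k : ℕ) : ℕ := ∑ j ∈ Finset.range (k+1), if Even (k - j) then j else 0

lemma Afun_succ_succ (k : ℕ) : Afun (k+2) = Afun k + (k+2) := by
  unfold Afun
  rw [Finset.sum_range_succ, Finset.sum_range_succ]
  have h1 : ∀ j ∈ Finset.range (k+1),
      (if Even (k+2-j) then j else 0) = (if Even (k-j) then j else 0) := by
    intro j hj
    simp only [Finset.mem_range] at hj
    have : k + 2 - j = (k - j) + 2 := by omega
    rw [this]
    simp [Nat.even_add]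
  rw [Finset.sum_congr rfl h1]
  simp

lemma Bval (k : ℕ) : ((2 * Afun k : ℕ) : ZMod 4) = if k % 4 = 1 then 2 else 0 := by
  induction k using Nat.strong_induction_on with
  | _ k ih =>
    match k with
    | 0 => decide
    | 1 => decide
    | 2 => decide
    | 3 => decide
    | (n+4) =>
      have h2 : Afun (n+4) = Afun n + (n+2) + (n+4) := by
        rw [show n + 4 = (n+2)+2 by ring, Afun_succ_succ, Afun_succ_succ]
      have ihn := ih n (by omega)
      have hmod : (n+4) % 4 = n % 4 := by omega
      rw [h2, hmod]
      push_cast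
      push_cast at ihn
      have hr : (2 * ((Afun n : ZMod 4) + ((n:ZMod 4)+2) + ((n:ZMod 4)+4)))
          = 2*(Afun n:ZMod 4) + 4*((n:ZMod 4)+3) := by ring
      rw [hr, show (4 : ZMod 4) = 0 by decide]
      simpa using ihn

lemma sym_sum (h : ℕ → ℕ) (n : ℕ) :
    ∑ χ ∈ Finset.Icc (-(n:ℤ)) (n:ℤ), h χ.natAbs = h 0 + 2 * ∑ j ∈ Finset.Icc 1 n, h j := by
  induction n with
  | zero => simp
  | succ n ih =>
    have hset : Finset.Icc (-((n:ℤ)+1)) ((n:ℤ)+1)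
        = insert (-((n:ℤ)+1)) (insert ((n:ℤ)+1) (Finset.Icc (-(n:ℤ)) (n:ℤ))) := by
      ext x
      simp only [Finset.mem_Icc, Finset.mem_insert]
      omega
    have h1 : (-((n:ℤ)+1)) ∉ insert ((n:ℤ)+1) (Finset.Icc (-(n:ℤ)) (n:ℤ)) := by
      simp only [Finset.mem_Icc, Finset.mem_insert]
      omega
    have h2 : ((n:ℤ)+1) ∉ Finset.Icc (-(n:ℤ)) (n:ℤ) := by
      simp only [Finset.mem_Icc]
      omega
    push_cast
    rw [hset, Finset.sum_insert h1, Finset.sum_insert h2, ih]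
    have hna : ((-((n:ℤ)+1)).natAbs) = n + 1 := by
      rw [Int.natAbs_neg]
      exact_mod_cast Int.natAbs_natCast (n+1)
    have hnb : (((n:ℤ)+1).natAbs) = n + 1 := by
      exact_mod_cast Int.natAbs_natCast (n+1)
    rw [hna, hnb, Finset.sum_Icc_succ_top (by omega : 1 ≤ n + 1)]
    ring

lemma wval (K k : ℕ) (hk : k ≤ K) :
    (∑ χ ∈ Finset.Icc (-(K : ℤ)) (K : ℤ),
        if χ.natAbs ≤ k ∧ Even (k - χ.natAbs) then χ.natAbs else 0) = 2 * Afun k := by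
  have hs := sym_sum (fun j => if j ≤ k ∧ Even (k - j) then j else 0) K
  rw [hs]
  have h0 : (if 0 ≤ k ∧ Even (k - 0) then 0 else 0) = 0 := by simp
  rw [h0, zero_add]
  congr 1
  have hsub : ∑ j ∈ Finset.Icc 1 k, (if j ≤ k ∧ Even (k - j) then j else 0)
      = ∑ j ∈ Finset.Icc 1 K, (if j ≤ k ∧ Even (k - j) then j else 0) := by
    apply Finset.sum_subset (Finset.Icc_subset_Icc_right hk)
    intro x hx hnx
    simp only [Finset.mem_Icc] at hx hnx
    have : ¬ (x ≤ k) := by omega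
    simp [this]
  rw [← hsub]
  unfold Afun
  rw [show Finset.range (k+1) = insert 0 (Finset.Icc 1 k) by ext x; simp; omega,
    Finset.sum_insert (by simp), ite_self, zero_add]
  apply Finset.sum_congr rfl
  intro j hj
  simp only [Finset.mem_Icc] at hj
  simp [hj.2]

/-- Anomaly cancellation criterion for `SL(2)`.  Let `m k` be the multiplicity of the
`(k+1)`-dimensional irreducible `V^k` in a symplectic representation `M` of `SL(2,ℂ)`
(so `m k` is even for even `k`), with `m k = 0` for `k ≥ K`.  The weight multiplicity of
`χ ∈ ℤ` is `m_χ = ∑_k m k` over those `k` with `|χ| ≤ k` and `k ≡ χ (mod 2)`.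
Then `∑_χ |χ| · m_χ / 4` is an integer iff `∑_ℓ m (4ℓ+1)` is even. -/
theorem stmt5 (m : ℕ → ℕ) (K : ℕ) (hK : ∀ k, K ≤ k → m k = 0)
    (hsymp : ∀ k, Even k → Even (m k)) :
    (4 ∣ ∑ χ ∈ Finset.Icc (-(K : ℤ)) (K : ℤ), χ.natAbs *
        (∑ k ∈ Finset.range (K + 1),
          if χ.natAbs ≤ k ∧ Even (k - χ.natAbs) then m k else 0)) ↔
    Even (∑ ℓ ∈ Finset.range (K + 1), m (4 * ℓ + 1)) := by
  set S := ∑ χ ∈ Finset.Icc (-(K : ℤ)) (K : ℤ), χ.natAbs *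
        (∑ k ∈ Finset.range (K + 1),
          if χ.natAbs ≤ k ∧ Even (k - χ.natAbs) then m k else 0) with hS
  set T := ∑ ℓ ∈ Finset.range (K + 1), m (4 * ℓ + 1) with hT
  -- Step 1: swap sums
  have step1 : S = ∑ k ∈ Finset.range (K + 1), (2 * Afun k) * m k := by
    rw [hS]
    simp_rw [Finset.mul_sum, mul_ite, mul_zero]
    rw [Finset.sum_comm]
    apply Finset.sum_congr rfl
    intro k hk
    simp only [Finset.mem_range] at hk
    rw [← wval K k (by omega), Finset.sum_mul]
    simp_rw [ite_mul, zero_mul]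
  -- Step 2: mod 4 computation
  have step2 : ((S : ℕ) : ZMod 4) = ((2 * T : ℕ) : ZMod 4) := by
    rw [step1]
    push_cast
    have : ∀ k ∈ Finset.range (K+1),
        ((2 * Afun k : ℕ) : ZMod 4) * (m k : ZMod 4)
          = (if k % 4 = 1 then ((2 * m k : ℕ) : ZMod 4) else 0) := by
      intro k _
      rw [Bval k]
      split <;> push_cast <;> ring
    rw [show ((2:ZMod 4) * (T:ZMod 4)) = ∑ k ∈ Finset.range (K+1),
        (if k % 4 = 1 then ((2 * m k : ℕ) : ZMod 4) else 0) from ?_]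
    · push_cast
      apply Finset.sum_congr rfl
      intro k hk
      have := this k hk
      push_cast at this
      exact this
    · -- reindex the filtered sum
      have hTT : (∑ k ∈ Finset.range (K+1), (if k % 4 = 1 then (2 * m k) else 0)) = 2 * T := by
        rw [← Finset.sum_filter]
        rw [hT, Finset.mul_sum]
        have hT2 : ∑ ℓ ∈ Finset.range (K + 1), 2 * m (4 * ℓ + 1)
            = ∑ ℓ ∈ Finset.filter (fun ℓ => 4 * ℓ + 1 ≤ K) (Finset.range (K + 1)),
                2 * m (4 * ℓ + 1) := by
          symm
          apply Finset.sum_subset (Finset.filter_subset _ _)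
          intro x hx hnx
          simp only [Finset.mem_filter, Finset.mem_range] at hx hnx
          have : m (4 * x + 1) = 0 := hK _ (by omega)
          simp [this]
        rw [hT2]
        apply Finset.sum_nbij' (fun k => k / 4) (fun ℓ => 4 * ℓ + 1)
        · intro a ha
          simp only [Finset.mem_filter, Finset.mem_range] at ha ⊢
          omega
        · intro a ha
          simp only [Finset.mem_filter, Finset.mem_range] at ha ⊢
          omega
        · intro a ha
          simp only [Finset.mem_filter, Finset.mem_range] at ha
          omega
        · intro a ha
          omega
        · intro a ha
          simp only [Finset.mem_filter, Finset.mem_range] at ha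
          have he : 4 * (a / 4) + 1 = a := by omega
          rw [he]
      calc (2:ZMod 4) * (T:ZMod 4) = ((2 * T : ℕ) : ZMod 4) := by push_cast; ring
        _ = _ := by
            rw [← hTT]
            push_cast [Finset.sum_ite]
            simp
  -- Step 3: conclude
  have h4 : (4 ∣ S) ↔ ((S : ZMod 4) = 0) := (ZMod.natCast_eq_zero_iff S 4).symm
  rw [h4, step2]
  rw [ZMod.natCast_eq_zero_iff]
  rw [Nat.even_iff]
  omega
end
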